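/- Theorem: Let J be a {2, n−1}-torsion free Jordan ring (n ≥ 2) with a nontrivial idempotent e and Peirce decomposition J = J₁ ⊕ J_{1/2} ⊕ J₀, satisfying: (i) for a_i ∈ J_i (i = 1, 0), t a_i = 0 for all t ∈ J_{1/2} implies a_i = 0; (ii) for a₀ ∈ J₀, t a₀ = 0 for all t ∈ J₀ implies a₀ = 0; (iii) for a ∈ J_{1/2}, t a = 0 for all t ∈ J₀ implies a = 0. Then every n-multiplicative derivation d of J is additive. -/

import Mathlib

/-- Peirce 1-component relative to `e`: elements `x` with `e*x = x`. -/
def peirce1 {J : Type*} [Mul J] (e : J) : Set J := {x | e * x = x}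

/-- Peirce 1/2-component relative to `e`: elements `x` with `e*x = (1/2)x`, i.e. `e*x + e*x = x`. -/
def peirceHalf {J : Type*} [Mul J] [Add J] (e : J) : Set J := {x | e * x + e * x = x}

/-- Peirce 0-component relative to `e`: elements `x` with `e*x = 0`. -/
def peirce0 {J : Type*} [Mul J] [Zero J] (e : J) : Set J := {x | e * x = 0}

/-- The right-normed nonassociative monomial `x₁(x₂(⋯(x_{n-1}x_n)⋯))` on a list of arguments. -/
def rnm {J : Type*} [Mul J] [Zero J] : List J → J
  | [] => 0
  | [x] => x
  | x :: y :: l => x * rnm (y :: l)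

/-- `d` is an `n`-multiplicative derivation (w.r.t. the right-normed monomial of degree `n`):
`d(m(x₁,…,xₙ)) = Σᵢ m(x₁,…,d(xᵢ),…,xₙ)`. -/
def IsNDer {J : Type*} [NonUnitalNonAssocRing J] (n : ℕ) (d : J → J) : Prop :=
  ∀ l : List J, l.length = n →
    d (rnm l) = ∑ i ∈ Finset.range n, rnm (l.set i (d (l.getD i 0)))

/-!
Write `D(x, y) = d (x + y) - d x - d y` and, for a word `w = [w₁, …, w_{n-1}]`,
`w z = w₁ (w₂ (⋯ (w_{n-1} z)))`. Applying the defining identity of `d` to `w₁, …, w_{n-1}, z`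
gives the transfer rule `D(w x, w y) = w D(x, y)`. Words in `e` act on `J₁, J_{1/2}, J₀` as
`1, 2⁻ᵏ, 0`, words in `J₀` kill `J₁` and preserve `J_{1/2}` and `J₀`; together with the
faithfulness hypotheses this pins `D(x, y)` inside a single Peirce space, where a second
application of the transfer rule makes it vanish. This is done for pairs in `J₁ × J₀`,
`J₁ × J_{1/2}`, `J₀ × J_{1/2}`, then `J_{1/2} × J₀ J_{1/2}`, and finally `J₀ × J₀`,
`J₁ × J₁`, `J_{1/2} × J_{1/2}`, which by the Peirce decomposition is additivity.
-/

open scoped Pointwise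

section

variable {J : Type*}

def FaithfulOn [Mul J] [Zero J] (S A : Set J) : Prop :=
  ∀ a ∈ A, (∀ t ∈ S, t * a = 0) → a = 0

section PeirceSpaces

variable [NonUnitalNonAssocRing J] {e a b t x y : J}

theorem mem_peirce1 : x ∈ peirce1 e ↔ e * x = x := Iff.rfl

theorem mem_peirceHalf : x ∈ peirceHalf e ↔ e * x + e * x = x := Iff.rfl

theorem mem_peirce0 : x ∈ peirce0 e ↔ e * x = 0 := Iff.rfl

theorem zero_mem_peirce1 : (0 : J) ∈ peirce1 e := mul_zero e

theorem zero_mem_peirce0 : (0 : J) ∈ peirce0 e := mul_zero e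

theorem add_mem_peirce1 (hx : x ∈ peirce1 e) (hy : y ∈ peirce1 e) : x + y ∈ peirce1 e := by
  rw [mem_peirce1, mul_add, mem_peirce1.1 hx, mem_peirce1.1 hy]

theorem add_mem_peirce0 (hx : x ∈ peirce0 e) (hy : y ∈ peirce0 e) : x + y ∈ peirce0 e := by
  rw [mem_peirce0, mul_add, mem_peirce0.1 hx, mem_peirce0.1 hy, add_zero]

theorem add_mem_peirceHalf (hx : x ∈ peirceHalf e) (hy : y ∈ peirceHalf e) :
    x + y ∈ peirceHalf e := by
  rw [mem_peirceHalf, mul_add]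
  linear_combination (norm := abel) mem_peirceHalf.1 hx + mem_peirceHalf.1 hy

theorem add_mem_peirce1_add_peirce0 (hx : x ∈ peirce1 e + peirce0 e)
    (hy : y ∈ peirce1 e + peirce0 e) : x + y ∈ peirce1 e + peirce0 e := by
  obtain ⟨a, ha, b, hb, rfl⟩ := Set.mem_add.1 hx
  obtain ⟨a', ha', b', hb', rfl⟩ := Set.mem_add.1 hy
  rw [add_add_add_comm]
  exact Set.add_mem_add (add_mem_peirce1 ha ha') (add_mem_peirce0 hb hb')

theorem neg_mem_peirceHalf (hx : x ∈ peirceHalf e) : -x ∈ peirceHalf e := by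
  rw [mem_peirceHalf, mul_neg, ← neg_add, mem_peirceHalf.1 hx]

theorem nsmul_mem_peirceHalf (hx : x ∈ peirceHalf e) (m : ℕ) : m • x ∈ peirceHalf e := by
  induction m with
  | zero => simp [mem_peirceHalf]
  | succ m ih => rw [succ_nsmul]; exact add_mem_peirceHalf ih hx

theorem mulLeft_mem_peirceHalf (hx : x ∈ peirceHalf e) : e * x ∈ peirceHalf e := by
  rw [mem_peirceHalf, ← mul_add, mem_peirceHalf.1 hx]

theorem eq_zero_of_mem_peirce1_of_mem_peirce0 (h1 : x ∈ peirce1 e) (h0 : x ∈ peirce0 e) : x = 0 :=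
  h1.symm.trans h0

theorem eq_zero_of_mem_peirce1_of_mem_peirceHalf (h1 : x ∈ peirce1 e) (hh : x ∈ peirceHalf e) :
    x = 0 := by
  have h : x + x = x := by rwa [mem_peirceHalf, mem_peirce1.1 h1] at hh
  simpa using h

theorem peirce_components_eq_zero (ha : a ∈ peirce1 e) (ht : t ∈ peirceHalf e)
    (hb : b ∈ peirce0 e) (h : a + t + b = 0) : a = 0 ∧ t = 0 ∧ b = 0 := by
  have h1 : a + e * t = 0 := by
    simpa [mul_add, mem_peirce1.1 ha, mem_peirce0.1 hb] using congrArg (e * ·) h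
  have h2 : a + e * (e * t) = 0 := by
    simpa [mul_add, mem_peirce1.1 ha] using congrArg (e * ·) h1
  have het : e * t = 0 := by
    linear_combination (norm := abel) 2 • h1 - 2 • h2
      + mem_peirceHalf.1 (mulLeft_mem_peirceHalf ht)
  have ht0 : t = 0 := by rw [← mem_peirceHalf.1 ht, het, add_zero]
  have ha0 : a = 0 := by rw [← h1, het, add_zero]
  refine ⟨ha0, ht0, ?_⟩
  simpa [ha0, ht0] using h

theorem eq_zero_of_mem_peirceHalf_of_mem_peirce1_add_peirce0 (ht : t ∈ peirceHalf e)
    (h : t ∈ peirce1 e + peirce0 e) : t = 0 := by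
  obtain ⟨a, ha, b, hb, rfl⟩ := Set.mem_add.1 h
  have := peirce_components_eq_zero ha (neg_mem_peirceHalf ht) hb (by abel)
  exact neg_eq_zero.1 this.2.1

end PeirceSpaces

section Jordan

variable [NonUnitalNonAssocCommRing J]

theorem IsCommJordan.of_jordan_identity (h : ∀ x y : J, x * x * y * x = x * x * (y * x)) :
    IsCommJordan J :=
  ⟨fun a b => by rw [mul_comm a b, mul_comm (b * a) (a * a), ← h, mul_comm _ a, mul_comm (a * a) b]⟩

variable [IsCommJordan J] (h2 : ∀ x : J, x + x = 0 → x = 0)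
include h2

theorem IsCommJordan.linearization (a b c y : J) :
    a * (b * c * y) + b * (c * a * y) + c * (a * b * y) =
      b * c * (a * y) + c * a * (b * y) + a * b * (c * y) := by
  have h : 2 • (a * (b * c * y) - b * c * (a * y) + (b * (c * a * y) - c * a * (b * y))
      + (c * (a * b * y) - a * b * (c * y))) = 0 :=
    congrArg (· y) (two_nsmul_lie_lmul_lmul_add_add_eq_zero a b c)
  rw [two_nsmul] at h
  rw [← sub_eq_zero, ← h2 _ h]
  abel

variable {e : J} (he : IsIdempotentElem e)
include he

theorem peirce_identity (w y : J) :
    w * (e * y) + e * (e * w * y) + e * (e * w * y) =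
      e * (w * y) + e * w * (e * y) + e * w * (e * y) := by
  have h := IsCommJordan.linearization h2 w e e y
  rwa [he.eq, mul_comm w e] at h

theorem peirce_cubic (x : J) :
    e * x + e * (e * (e * x)) + e * (e * (e * x)) = e * (e * x) + e * (e * x) + e * (e * x) := by
  have h := peirce_identity h2 he x e
  rwa [he.eq, mul_comm x e, mul_comm (e * x) e] at h

theorem exists_peirce_decomposition (x : J) :
    ∃ a ∈ peirce1 e, ∃ t ∈ peirceHalf e, ∃ b ∈ peirce0 e, x = a + t + b := by
  -- the components are the polynomials in `L_e` splitting `L_e (L_e - 1) (2 L_e - 1) = 0`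
  have h := peirce_cubic h2 he x
  refine ⟨e * (e * x) + e * (e * x) - e * x, ?_,
    4 • (e * x - e * (e * x)), ?_, x - 3 • (e * x) + 2 • (e * (e * x)), ?_, by abel⟩
  · rw [mem_peirce1]; simp only [mul_add, mul_sub]
    linear_combination (norm := abel) h
  · rw [mem_peirceHalf]; simp only [mul_smul_comm, mul_sub]
    linear_combination (norm := abel) (-4 : ℤ) • h
  · rw [mem_peirce0]; simp only [mul_add, mul_sub, mul_smul_comm]
    linear_combination (norm := abel) h

variable {a b c s t : J}

theorem mul_eq_zero_of_mem_peirce1_of_mem_peirce0 (ha : a ∈ peirce1 e) (hc : c ∈ peirce0 e) :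
    a * c = 0 := by
  have hac := peirce_identity h2 he a c
  have hca := peirce_identity h2 he c a
  simp only [mem_peirce1.1 ha, mem_peirce0.1 hc, mul_zero, zero_mul, add_zero, zero_add,
    mul_comm c a] at hac hca
  linear_combination (norm := abel) hca + hac

theorem mul_mem_peirce0 (hb : b ∈ peirce0 e) (hc : c ∈ peirce0 e) : b * c ∈ peirce0 e := by
  have h := peirce_identity h2 he b c
  simp only [mem_peirce0.1 hb, mem_peirce0.1 hc, mul_zero, zero_mul, add_zero] at h
  exact h.symm

theorem mul_mem_peirceHalf_of_mem_peirce1 (ha : a ∈ peirce1 e) (ht : t ∈ peirceHalf e) :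
    a * t ∈ peirceHalf e := by
  have h := peirce_identity h2 he a t
  rw [mem_peirce1.1 ha] at h
  have hL : e * (a * t) = a * (e * t) := by linear_combination (norm := abel) h
  rw [mem_peirceHalf, hL, ← mul_add, mem_peirceHalf.1 ht]

theorem mul_mem_peirceHalf_of_mem_peirce0 (hc : c ∈ peirce0 e) (ht : t ∈ peirceHalf e) :
    c * t ∈ peirceHalf e := by
  have h := peirce_identity h2 he c t
  simp only [mem_peirce0.1 hc, mul_zero, zero_mul, add_zero] at h
  rw [mem_peirceHalf, ← h, ← mul_add, mem_peirceHalf.1 ht]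

theorem mul_mem_peirce1_add_peirce0 (ht : t ∈ peirceHalf e) (hs : s ∈ peirceHalf e) :
    t * s ∈ peirce1 e + peirce0 e := by
  -- membership means `e (e (t s)) = e (t s)`; the linearization at `(t, s, e, e)` gives four
  -- times this identity
  have h := IsCommJordan.linearization h2 t s e e
  rw [he.eq, mul_comm s e, mul_comm t e, mul_comm (e * s) e, mul_comm (e * t) e,
    mul_comm (t * s) e, mul_comm (e * s) (e * t)] at h
  have F1 : t * (e * (e * s)) + t * (e * (e * s)) = t * (e * s) := by
    rw [← mul_add, mem_peirceHalf.1 (mulLeft_mem_peirceHalf hs)]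
  have F2 : t * (e * s) = e * t * (e * s) + e * t * (e * s) := by
    rw [← add_mul, mem_peirceHalf.1 ht]
  have F3 : s * (e * (e * t)) + s * (e * (e * t)) = s * (e * t) := by
    rw [← mul_add, mem_peirceHalf.1 (mulLeft_mem_peirceHalf ht)]
  have F4 : s * (e * t) = e * t * (e * s) + e * t * (e * s) := by
    rw [mul_comm, ← mul_add, mem_peirceHalf.1 hs]
  have h4 : e * (e * (t * s)) - e * (t * s) + (e * (e * (t * s)) - e * (t * s)) +
      (e * (e * (t * s)) - e * (t * s) + (e * (e * (t * s)) - e * (t * s))) = 0 := by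
    linear_combination (norm := abel) 4 • h - 2 • F1 - 2 • F2 - 2 • F3 - 2 • F4
  have hE : e * (e * (t * s)) = e * (t * s) := sub_eq_zero.1 (h2 _ (h2 _ h4))
  exact Set.mem_add.2 ⟨e * (t * s), hE, t * s - e * (t * s),
    by rw [mem_peirce0, mul_sub, hE, sub_self], by abel⟩

end Jordan

section Words

variable [NonUnitalNonAssocRing J]

def wordMul : List J → J →+ J
  | [] => AddMonoidHom.id J
  | g :: w => (AddMonoidHom.mulLeft g).comp (wordMul w)

@[simp]
theorem wordMul_nil (z : J) : wordMul [] z = z := rfl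

@[simp]
theorem wordMul_cons (g : J) (w : List J) (z : J) : wordMul (g :: w) z = g * wordMul w z := rfl

theorem rnm_append_singleton (w : List J) (z : J) : rnm (w ++ [z]) = wordMul w z := by
  induction w with
  | nil => rfl
  | cons g w ih =>
    cases w with
    | nil => rfl
    | cons g' w => exact congrArg (g * ·) ih

theorem wordMul_mem {S A : Set J} (hSA : ∀ s ∈ S, ∀ a ∈ A, s * a ∈ A) {w : List J}
    (hw : ∀ s ∈ w, s ∈ S) {z : J} (hz : z ∈ A) : wordMul w z ∈ A := by
  induction w with
  | nil => exact hz
  | cons g w ih =>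
    rw [List.forall_mem_cons] at hw
    exact hSA g hw.1 _ (ih hw.2)

theorem eq_zero_of_forall_wordMul_eq_zero {S A : Set J} (hSA : ∀ s ∈ S, ∀ a ∈ A, s * a ∈ A)
    (hA : FaithfulOn S A) {z : J} (hz : z ∈ A) {m : ℕ}
    (h : ∀ w : List J, w.length = m → (∀ s ∈ w, s ∈ S) → wordMul w z = 0) : z = 0 := by
  induction m with
  | zero => simpa using h [] rfl (by simp)
  | succ m ih =>
    refine ih fun w hw hwS => hA _ (wordMul_mem hSA hwS hz) fun s hs => ?_
    simpa using h (s :: w) (by simp [hw]) (List.forall_mem_cons.2 ⟨hs, hwS⟩)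

variable {e a b t : J} {k : ℕ}

theorem wordMul_replicate_of_mem_peirce1 (ha : a ∈ peirce1 e) :
    wordMul (List.replicate k e) a = a := by
  induction k with
  | zero => rfl
  | succ k ih => rw [List.replicate_succ, wordMul_cons, ih, mem_peirce1.1 ha]

theorem wordMul_replicate_succ_of_mem_peirce0 (hb : b ∈ peirce0 e) :
    wordMul (List.replicate (k + 1) e) b = 0 := by
  induction k with
  | zero => exact hb
  | succ k ih => rw [List.replicate_succ, wordMul_cons, ih, mul_zero]

theorem wordMul_replicate_mem_peirceHalf (ht : t ∈ peirceHalf e) :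
    wordMul (List.replicate k e) t ∈ peirceHalf e := by
  induction k with
  | zero => exact ht
  | succ k ih =>
    rw [List.replicate_succ, wordMul_cons]
    exact mulLeft_mem_peirceHalf ih

theorem two_pow_smul_wordMul_replicate (ht : t ∈ peirceHalf e) :
    2 ^ k • wordMul (List.replicate k e) t = t := by
  induction k with
  | zero => simp
  | succ k ih =>
    rw [List.replicate_succ, wordMul_cons, pow_succ, mul_comm, mul_smul, two_smul, ← smul_add,
      mem_peirceHalf.1 (wordMul_replicate_mem_peirceHalf ht), ih]

theorem wordMul_replicate_two_pow_smul (ht : t ∈ peirceHalf e) :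
    wordMul (List.replicate k e) (2 ^ k • t) = t := by
  rw [map_nsmul, two_pow_smul_wordMul_replicate ht]

end Words

section PeirceWords

variable [NonUnitalNonAssocCommRing J] [IsCommJordan J] (h2 : ∀ x : J, x + x = 0 → x = 0)
  {e : J} (he : IsIdempotentElem e)
include h2 he

theorem wordMul_mem_peirce0 {g : List J} (hg : ∀ c ∈ g, c ∈ peirce0 e) {b : J}
    (hb : b ∈ peirce0 e) : wordMul g b ∈ peirce0 e :=
  wordMul_mem (fun _ hc _ hb => mul_mem_peirce0 h2 he hc hb) hg hb

theorem wordMul_mem_peirceHalf {g : List J} (hg : ∀ c ∈ g, c ∈ peirce0 e) {t : J}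
    (ht : t ∈ peirceHalf e) : wordMul g t ∈ peirceHalf e :=
  wordMul_mem (fun _ hc _ ht => mul_mem_peirceHalf_of_mem_peirce0 h2 he hc ht) hg ht

theorem wordMul_eq_zero_of_mem_peirce1 {g : List J} (hg : ∀ c ∈ g, c ∈ peirce0 e) (hne : g ≠ [])
    {a : J} (ha : a ∈ peirce1 e) : wordMul g a = 0 := by
  induction g with
  | nil => exact absurd rfl hne
  | cons c g ih =>
    rw [List.forall_mem_cons] at hg
    rw [wordMul_cons]
    rcases eq_or_ne g [] with rfl | hg'
    · rw [wordMul_nil, mul_comm]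
      exact mul_eq_zero_of_mem_peirce1_of_mem_peirce0 h2 he ha hg.1
    · rw [ih hg.2 hg', mul_zero]

theorem mem_peirce0_of_wordMul_replicate_eq_zero {k : ℕ} {x : J}
    (h : wordMul (List.replicate (k + 1) e) x = 0) : x ∈ peirce0 e := by
  obtain ⟨a, ha, t, ht, b, hb, rfl⟩ := exists_peirce_decomposition h2 he x
  rw [map_add, map_add, wordMul_replicate_of_mem_peirce1 ha,
    wordMul_replicate_succ_of_mem_peirce0 hb] at h
  obtain ⟨rfl, ht', -⟩ :=
    peirce_components_eq_zero ha (wordMul_replicate_mem_peirceHalf ht) zero_mem_peirce0 h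
  rwa [← two_pow_smul_wordMul_replicate (k := k + 1) ht, ht', smul_zero, zero_add, zero_add]

theorem mem_peirce1_of_forall_wordMul_eq_zero (h00 : FaithfulOn (peirce0 e) (peirce0 e))
    (h0H : FaithfulOn (peirce0 e) (peirceHalf e)) {m : ℕ} {x : J}
    (h : ∀ g : List J, g.length = m + 1 → (∀ c ∈ g, c ∈ peirce0 e) → wordMul g x = 0) :
    x ∈ peirce1 e := by
  obtain ⟨a, ha, t, ht, b, hb, rfl⟩ := exists_peirce_decomposition h2 he x
  have hparts : ∀ g : List J, g.length = m + 1 → (∀ c ∈ g, c ∈ peirce0 e) →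
      wordMul g t = 0 ∧ wordMul g b = 0 := by
    intro g hg hg0
    have hx := h g hg hg0
    rw [map_add, map_add,
      wordMul_eq_zero_of_mem_peirce1 h2 he hg0 (List.ne_nil_of_length_eq_add_one hg) ha] at hx
    exact (peirce_components_eq_zero zero_mem_peirce1 (wordMul_mem_peirceHalf h2 he hg0 ht)
      (wordMul_mem_peirce0 h2 he hg0 hb) hx).2
  have ht0 : t = 0 := eq_zero_of_forall_wordMul_eq_zero
    (fun _ hc _ ht => mul_mem_peirceHalf_of_mem_peirce0 h2 he hc ht) h0H ht
    fun g hg hg0 => (hparts g hg hg0).1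
  have hb0 : b = 0 := eq_zero_of_forall_wordMul_eq_zero
    (fun _ hc _ hb => mul_mem_peirce0 h2 he hc hb) h00 hb fun g hg hg0 => (hparts g hg hg0).2
  rwa [ht0, hb0, add_zero, add_zero]

theorem eq_zero_of_forall_wordMul_cons_eq_zero (hH0 : FaithfulOn (peirceHalf e) (peirce0 e))
    (h00 : FaithfulOn (peirce0 e) (peirce0 e)) {m : ℕ} {x : J} (hx : x ∈ peirce0 e)
    (h : ∀ g : List J, g.length = m → (∀ c ∈ g, c ∈ peirce0 e) →
      ∀ s ∈ peirceHalf e, wordMul (s :: g) x = 0) : x = 0 :=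
  eq_zero_of_forall_wordMul_eq_zero (fun _ hc _ hb => mul_mem_peirce0 h2 he hc hb) h00 hx
    fun g hg hg0 => hH0 _ (wordMul_mem_peirce0 h2 he hg0 hx) (h g hg hg0)

end PeirceWords

section Derivation

variable [NonUnitalNonAssocRing J]

def addDefect (d : J → J) (x y : J) : J := d (x + y) - d x - d y

variable {d : J → J} {n : ℕ}

theorem addDefect_eq_zero_iff {x y : J} : addDefect d x y = 0 ↔ d (x + y) = d x + d y := by
  rw [addDefect, sub_sub, sub_eq_zero]

theorem addDefect_comm (x y : J) : addDefect d x y = addDefect d y x := by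
  rw [addDefect, addDefect, add_comm x y]
  abel

theorem addDefect_zero_left (h0 : d 0 = 0) (x : J) : addDefect d 0 x = 0 := by
  rw [addDefect, zero_add, h0]
  abel

theorem addDefect_add_right (x y z : J) :
    addDefect d x (y + z) = addDefect d x y + addDefect d (x + y) z - addDefect d y z := by
  simp only [addDefect, add_assoc]
  abel

theorem IsNDer.apply_wordMul (hd : IsNDer n d) {w : List J} (hw : w.length + 1 = n) (z : J) :
    d (wordMul w z) =
      ∑ i ∈ Finset.range w.length, wordMul (w.set i (d (w.getD i 0))) z + wordMul w (d z) := by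
  rw [← rnm_append_singleton, hd _ (by simp [hw]), ← hw, Finset.sum_range_succ]
  congr 1
  · refine Finset.sum_congr rfl fun i hi => ?_
    have hi : i < w.length := Finset.mem_range.mp hi
    rw [List.getD_append _ _ _ _ hi, List.set_append_left _ _ hi, rnm_append_singleton]
  · rw [List.getD_append_right _ _ _ _ le_rfl, List.set_append_right _ _ le_rfl]
    simp [rnm_append_singleton]

theorem IsNDer.map_zero (hd : IsNDer n d) (hn : 2 ≤ n) : d 0 = 0 := by
  obtain ⟨k, rfl⟩ : ∃ k, n = k + 2 := ⟨n - 2, by omega⟩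
  simpa using hd.apply_wordMul (w := 0 :: List.replicate k 0) (by simp) 0

theorem IsNDer.addDefect_wordMul (hd : IsNDer n d) {w : List J} (hw : w.length + 1 = n)
    (x y : J) : addDefect d (wordMul w x) (wordMul w y) = wordMul w (addDefect d x y) := by
  rw [addDefect, ← map_add, hd.apply_wordMul hw, hd.apply_wordMul hw, hd.apply_wordMul hw]
  simp only [addDefect, map_add, map_sub, Finset.sum_add_distrib]
  abel

end Derivation

section Additivity

variable [NonUnitalNonAssocCommRing J] [IsCommJordan J] {k : ℕ} {d : J → J}
  (hd : IsNDer (k + 2) d) (h2 : ∀ x : J, x + x = 0 → x = 0) {e : J} (he : IsIdempotentElem e)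
  (hH1 : FaithfulOn (peirceHalf e) (peirce1 e)) (hH0 : FaithfulOn (peirceHalf e) (peirce0 e))
  (h00 : FaithfulOn (peirce0 e) (peirce0 e)) (h0H : FaithfulOn (peirce0 e) (peirceHalf e))
include hd h2 he

include h00 h0H in
theorem IsNDer.addDefect_mem_peirce1 {a : J} (ha : a ∈ peirce1 e) (x : J) :
    addDefect d a x ∈ peirce1 e := by
  refine mem_peirce1_of_forall_wordMul_eq_zero h2 he h00 h0H (m := k) fun g hg hg0 => ?_
  rw [← hd.addDefect_wordMul (by omega),
    wordMul_eq_zero_of_mem_peirce1 h2 he hg0 (List.ne_nil_of_length_eq_add_one hg) ha,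
    addDefect_zero_left (hd.map_zero (by omega))]

theorem IsNDer.addDefect_mem_peirce0 {b : J} (hb : b ∈ peirce0 e) (x : J) :
    addDefect d b x ∈ peirce0 e := by
  refine mem_peirce0_of_wordMul_replicate_eq_zero h2 he (k := k) ?_
  rw [← hd.addDefect_wordMul (by simp), wordMul_replicate_succ_of_mem_peirce0 hb,
    addDefect_zero_left (hd.map_zero (by omega))]

include h00 h0H in
theorem IsNDer.addDefect_eq_zero_of_mem_peirce1_of_mem_peirce0 {a b : J} (ha : a ∈ peirce1 e)
    (hb : b ∈ peirce0 e) : addDefect d a b = 0 :=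
  eq_zero_of_mem_peirce1_of_mem_peirce0 (hd.addDefect_mem_peirce1 h2 he h00 h0H ha b)
    (addDefect_comm b a ▸ hd.addDefect_mem_peirce0 h2 he hb a)

include h00 h0H in
theorem IsNDer.addDefect_mem_peirce1_add_peirce0 (x : J) {y : J}
    (hy : y ∈ peirce1 e + peirce0 e) : addDefect d x y ∈ peirce1 e + peirce0 e := by
  obtain ⟨a, ha, b, hb, rfl⟩ := Set.mem_add.1 hy
  rw [addDefect_add_right, hd.addDefect_eq_zero_of_mem_peirce1_of_mem_peirce0 h2 he h00 h0H ha hb,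
    sub_zero, addDefect_comm x, addDefect_comm (x + a)]
  exact Set.add_mem_add (hd.addDefect_mem_peirce1 h2 he h00 h0H ha x)
    (hd.addDefect_mem_peirce0 h2 he hb (x + a))

include h00 h0H in
theorem IsNDer.wordMul_addDefect_eq_zero {g : List J} (hg : g.length = k + 1) {x y : J}
    (hD : wordMul g (addDefect d x y) ∈ peirceHalf e)
    (hy : wordMul g y ∈ peirce1 e + peirce0 e) : wordMul g (addDefect d x y) = 0 :=
  eq_zero_of_mem_peirceHalf_of_mem_peirce1_add_peirce0 hD <|
    hd.addDefect_wordMul (w := g) (by omega) x y ▸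
      hd.addDefect_mem_peirce1_add_peirce0 h2 he h00 h0H _ hy

include hH1 h00 h0H in
theorem IsNDer.addDefect_eq_zero_of_mem_peirce1_of_mem_peirceHalf {a t : J} (ha : a ∈ peirce1 e)
    (ht : t ∈ peirceHalf e) : addDefect d a t = 0 := by
  have hD := hd.addDefect_mem_peirce1 h2 he h00 h0H ha t
  refine hH1 _ hD fun s hs => ?_
  have hword : wordMul (s :: List.replicate k e) (addDefect d a t) = s * addDefect d a t := by
    rw [wordMul_cons, wordMul_replicate_of_mem_peirce1 hD]
  rw [← hword]
  refine hd.wordMul_addDefect_eq_zero h2 he h00 h0H (by simp) ?_ ?_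
  · rw [hword, mul_comm]
    exact mul_mem_peirceHalf_of_mem_peirce1 h2 he hD hs
  · rw [wordMul_cons]
    exact mul_mem_peirce1_add_peirce0 h2 he hs (wordMul_replicate_mem_peirceHalf ht)

include hH0 h00 h0H in
theorem IsNDer.addDefect_eq_zero_of_mem_peirce0_of_mem_peirceHalf {b t : J} (hb : b ∈ peirce0 e)
    (ht : t ∈ peirceHalf e) : addDefect d b t = 0 := by
  have hD := hd.addDefect_mem_peirce0 h2 he hb t
  refine eq_zero_of_forall_wordMul_cons_eq_zero h2 he hH0 h00 (m := k) hD fun g hg hg0 s hs => ?_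
  refine hd.wordMul_addDefect_eq_zero h2 he h00 h0H (by simp [hg]) ?_ ?_
  · rw [wordMul_cons, mul_comm]
    exact mul_mem_peirceHalf_of_mem_peirce0 h2 he (wordMul_mem_peirce0 h2 he hg0 hD) hs
  · rw [wordMul_cons]
    exact mul_mem_peirce1_add_peirce0 h2 he hs (wordMul_mem_peirceHalf h2 he hg0 ht)

include hH1 hH0 h00 h0H in
theorem IsNDer.addDefect_eq_zero_of_mem_peirce1_add_peirce0_of_mem_peirceHalf {x t : J}
    (hx : x ∈ peirce1 e + peirce0 e) (ht : t ∈ peirceHalf e) : addDefect d x t = 0 := by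
  obtain ⟨a, ha, b, hb, rfl⟩ := Set.mem_add.1 hx
  have h0 : addDefect d (a + b) t ∈ peirce0 e := by
    refine mem_peirce0_of_wordMul_replicate_eq_zero h2 he (k := k) ?_
    rw [← hd.addDefect_wordMul (by simp), map_add, wordMul_replicate_of_mem_peirce1 ha,
      wordMul_replicate_succ_of_mem_peirce0 hb, add_zero]
    exact hd.addDefect_eq_zero_of_mem_peirce1_of_mem_peirceHalf h2 he hH1 h00 h0H ha
      (wordMul_replicate_mem_peirceHalf ht)
  have h1 : addDefect d (a + b) t ∈ peirce1 e := by
    refine mem_peirce1_of_forall_wordMul_eq_zero h2 he h00 h0H (m := k) fun g hg hg0 => ?_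
    rw [← hd.addDefect_wordMul (by omega), map_add,
      wordMul_eq_zero_of_mem_peirce1 h2 he hg0 (List.ne_nil_of_length_eq_add_one hg) ha, zero_add]
    exact hd.addDefect_eq_zero_of_mem_peirce0_of_mem_peirceHalf h2 he hH0 h00 h0H
      (wordMul_mem_peirce0 h2 he hg0 hb) (wordMul_mem_peirceHalf h2 he hg0 ht)
  exact eq_zero_of_mem_peirce1_of_mem_peirce0 h1 h0

include hH1 hH0 h00 h0H in
theorem IsNDer.addDefect_mul_eq_zero {w z c : J} (hw : w ∈ peirceHalf e) (hz : z ∈ peirceHalf e)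
    (hc : c ∈ peirce0 e) : addDefect d w (c * z) = 0 := by
  have hP : (w + w) * z ∈ peirce1 e + peirce0 e :=
    mul_mem_peirce1_add_peirce0 h2 he (add_mem_peirceHalf hw hw) hz
  have hC : c * z ∈ peirceHalf e := mul_mem_peirceHalf_of_mem_peirce0 h2 he hc hz
  have hwe : (w + w + c) * e = w := by
    rw [mul_comm, mul_add, mul_add, mem_peirceHalf.1 hw, mem_peirce0.1 hc, add_zero]
  -- the word `(w + w + c) eᵏ` sends `2ᵏ z` to `(w + w) z + c z` and `e` to `w`
  have hword :=
    hd.addDefect_wordMul (w := (w + w + c) :: List.replicate k e) (by simp) (2 ^ k • z) e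
  simp only [wordMul_cons] at hword
  rw [wordMul_replicate_two_pow_smul hz, wordMul_replicate_of_mem_peirce1 he, hwe, add_mul,
    addDefect_comm _ e, hd.addDefect_eq_zero_of_mem_peirce1_of_mem_peirceHalf h2 he hH1 h00 h0H he
      (nsmul_mem_peirceHalf hz _), _root_.map_zero, mul_zero] at hword
  have hsplit := addDefect_add_right (d := d) ((w + w) * z) (c * z) w
  rw [hd.addDefect_eq_zero_of_mem_peirce1_add_peirce0_of_mem_peirceHalf h2 he hH1 hH0 h00 h0H hP hC,
    hd.addDefect_eq_zero_of_mem_peirce1_add_peirce0_of_mem_peirceHalf h2 he hH1 hH0 h00 h0H hP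
      (add_mem_peirceHalf hC hw), hword, zero_add, zero_sub, zero_eq_neg] at hsplit
  rwa [addDefect_comm]

include hH1 hH0 h00 h0H in
theorem IsNDer.addDefect_mem_peirce1_of_mem_peirceHalf {u v : J} (hu : u ∈ peirceHalf e)
    (hv : v ∈ peirceHalf e) : addDefect d u v ∈ peirce1 e := by
  refine mem_peirce1_of_forall_wordMul_eq_zero h2 he h00 h0H (m := k) fun g hg hg0 => ?_
  obtain ⟨c, g, rfl⟩ := List.exists_cons_of_length_eq_add_one hg
  rw [List.forall_mem_cons] at hg0
  rw [← hd.addDefect_wordMul (by omega), wordMul_cons, wordMul_cons]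
  exact hd.addDefect_mul_eq_zero h2 he hH1 hH0 h00 h0H
    (mul_mem_peirceHalf_of_mem_peirce0 h2 he hg0.1 (wordMul_mem_peirceHalf h2 he hg0.2 hu))
    (wordMul_mem_peirceHalf h2 he hg0.2 hv) hg0.1

include hH1 hH0 h00 h0H in
theorem IsNDer.addDefect_eq_zero_of_mem_peirce0 {b b' : J} (hb : b ∈ peirce0 e)
    (hb' : b' ∈ peirce0 e) : addDefect d b b' = 0 := by
  refine eq_zero_of_forall_wordMul_cons_eq_zero h2 he hH0 h00 (m := k)
    (hd.addDefect_mem_peirce0 h2 he hb b') fun g hg hg0 s hs => ?_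
  rw [← hd.addDefect_wordMul (by simp [hg]), wordMul_cons, wordMul_cons, mul_comm s (wordMul g b')]
  refine hd.addDefect_mul_eq_zero h2 he hH1 hH0 h00 h0H ?_ hs (wordMul_mem_peirce0 h2 he hg0 hb')
  rw [mul_comm]
  exact mul_mem_peirceHalf_of_mem_peirce0 h2 he (wordMul_mem_peirce0 h2 he hg0 hb) hs

include hH1 hH0 h00 h0H in
theorem IsNDer.addDefect_eq_zero_of_mem_peirce1 {a a' : J} (ha : a ∈ peirce1 e)
    (ha' : a' ∈ peirce1 e) : addDefect d a a' = 0 := by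
  have hD := hd.addDefect_mem_peirce1 h2 he h00 h0H ha a'
  refine hH1 _ hD fun s hs => eq_zero_of_mem_peirce1_of_mem_peirceHalf (e := e) ?_ ?_
  · have hword := hd.addDefect_wordMul (w := s :: List.replicate k e) (by simp) a a'
    simp only [wordMul_cons, wordMul_replicate_of_mem_peirce1 ha,
      wordMul_replicate_of_mem_peirce1 ha', wordMul_replicate_of_mem_peirce1 hD] at hword
    rw [← hword, mul_comm s a, mul_comm s a']
    exact hd.addDefect_mem_peirce1_of_mem_peirceHalf h2 he hH1 hH0 h00 h0H
      (mul_mem_peirceHalf_of_mem_peirce1 h2 he ha hs)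
      (mul_mem_peirceHalf_of_mem_peirce1 h2 he ha' hs)
  · rw [mul_comm]
    exact mul_mem_peirceHalf_of_mem_peirce1 h2 he hD hs

include hH1 hH0 h00 h0H in
theorem IsNDer.map_add_of_mem_peirce1_add_peirce0 {x y : J} (hx : x ∈ peirce1 e + peirce0 e)
    (hy : y ∈ peirce1 e + peirce0 e) : d (x + y) = d x + d y := by
  obtain ⟨a, ha, b, hb, rfl⟩ := Set.mem_add.1 hx
  obtain ⟨a', ha', b', hb', rfl⟩ := Set.mem_add.1 hy
  have h10 {a b : J} (ha : a ∈ peirce1 e) (hb : b ∈ peirce0 e) : d (a + b) = d a + d b :=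
    addDefect_eq_zero_iff.1 (hd.addDefect_eq_zero_of_mem_peirce1_of_mem_peirce0 h2 he h00 h0H ha hb)
  calc d (a + b + (a' + b')) = d (a + a' + (b + b')) := by rw [add_add_add_comm]
    _ = d a + d a' + (d b + d b') := by
      rw [h10 (add_mem_peirce1 ha ha') (add_mem_peirce0 hb hb'),
        addDefect_eq_zero_iff.1 (hd.addDefect_eq_zero_of_mem_peirce1 h2 he hH1 hH0 h00 h0H ha ha'),
        addDefect_eq_zero_iff.1 (hd.addDefect_eq_zero_of_mem_peirce0 h2 he hH1 hH0 h00 h0H hb hb')]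
    _ = d (a + b) + d (a' + b') := by rw [h10 ha hb, h10 ha' hb']; abel

include hH1 hH0 h00 h0H in
theorem IsNDer.addDefect_eq_zero_of_mem_peirceHalf {u v : J} (hu : u ∈ peirceHalf e)
    (hv : v ∈ peirceHalf e) : addDefect d u v = 0 := by
  have hD := hd.addDefect_mem_peirce1_of_mem_peirceHalf h2 he hH1 hH0 h00 h0H hu hv
  refine hH1 _ hD fun s hs => ?_
  have hword := hd.addDefect_wordMul (w := s :: List.replicate k e) (by simp) u v
  simp only [wordMul_cons, wordMul_replicate_of_mem_peirce1 hD] at hword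
  rw [← hword, addDefect_eq_zero_iff]
  exact hd.map_add_of_mem_peirce1_add_peirce0 h2 he hH1 hH0 h00 h0H
    (mul_mem_peirce1_add_peirce0 h2 he hs (wordMul_replicate_mem_peirceHalf hu))
    (mul_mem_peirce1_add_peirce0 h2 he hs (wordMul_replicate_mem_peirceHalf hv))

include hH1 hH0 h00 h0H in
theorem IsNDer.map_add (x y : J) : d (x + y) = d x + d y := by
  obtain ⟨a, ha, t, ht, b, hb, rfl⟩ := exists_peirce_decomposition h2 he x
  obtain ⟨a', ha', t', ht', b', hb', rfl⟩ := exists_peirce_decomposition h2 he y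
  have hsplit {p s : J} (hp : p ∈ peirce1 e + peirce0 e) (hs : s ∈ peirceHalf e) :
      d (p + s) = d p + d s := addDefect_eq_zero_iff.1 <|
    hd.addDefect_eq_zero_of_mem_peirce1_add_peirce0_of_mem_peirceHalf h2 he hH1 hH0 h00 h0H hp hs
  have hp : a + b ∈ peirce1 e + peirce0 e := Set.add_mem_add ha hb
  have hp' : a' + b' ∈ peirce1 e + peirce0 e := Set.add_mem_add ha' hb'
  calc d (a + t + b + (a' + t' + b')) = d (a + b + (a' + b') + (t + t')) := by congr 1; abel
    _ = d (a + b) + d (a' + b') + (d t + d t') := by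
      rw [hsplit (add_mem_peirce1_add_peirce0 hp hp') (add_mem_peirceHalf ht ht'),
        hd.map_add_of_mem_peirce1_add_peirce0 h2 he hH1 hH0 h00 h0H hp hp',
        addDefect_eq_zero_iff.1
          (hd.addDefect_eq_zero_of_mem_peirceHalf h2 he hH1 hH0 h00 h0H ht ht')]
    _ = d (a + t + b) + d (a' + t' + b') := by
      rw [add_right_comm a t b, add_right_comm a' t' b', hsplit hp ht, hsplit hp' ht']
      abel

end Additivity

end

theorem nDer_additive_general {n : ℕ} (hn : 2 ≤ n) {J : Type*} [NonUnitalNonAssocCommRing J]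
    (hJordan : ∀ x y : J, ((x * x) * y) * x = (x * x) * (y * x))
    (h2 : ∀ x : J, x + x = 0 → x = 0)
    (e : J) (hid : e * e = e)
    (hcond1 : ∀ a ∈ peirce1 e, (∀ t ∈ peirceHalf e, t * a = 0) → a = 0)
    (hcond1' : ∀ a ∈ peirce0 e, (∀ t ∈ peirceHalf e, t * a = 0) → a = 0)
    (hcond2 : ∀ a ∈ peirce0 e, (∀ t ∈ peirce0 e, t * a = 0) → a = 0)
    (hcond3 : ∀ a ∈ peirceHalf e, (∀ t ∈ peirce0 e, t * a = 0) → a = 0)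
    (d : J → J) (hder : IsNDer n d) :
    ∀ a b : J, d (a + b) = d a + d b := by
  obtain ⟨k, rfl⟩ : ∃ k, n = k + 2 := ⟨n - 2, by omega⟩
  have := IsCommJordan.of_jordan_identity hJordan
  exact hder.map_add h2 hid hcond1 hcond1' hcond2 hcond3

theorem nDer_additive {n : ℕ} (hn : 2 ≤ n) {J : Type*} [NonUnitalNonAssocCommRing J]
    (hJordan : ∀ x y : J, ((x * x) * y) * x = (x * x) * (y * x))
    (h2 : ∀ x : J, x + x = 0 → x = 0)
    (hn1 : ∀ x : J, (n - 1) • x = 0 → x = 0)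
    (e : J) (hid : e * e = e) (hne : e ≠ 0) (hnu : ∃ x : J, e * x ≠ x)
    (hcond1 : ∀ a ∈ peirce1 e, (∀ t ∈ peirceHalf e, t * a = 0) → a = 0)
    (hcond1' : ∀ a ∈ peirce0 e, (∀ t ∈ peirceHalf e, t * a = 0) → a = 0)
    (hcond2 : ∀ a ∈ peirce0 e, (∀ t ∈ peirce0 e, t * a = 0) → a = 0)
    (hcond3 : ∀ a ∈ peirceHalf e, (∀ t ∈ peirce0 e, t * a = 0) → a = 0)
    (d : J → J) (hder : IsNDer n d) :
    ∀ a b : J, d (a + b) = d a + d b :=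
  nDer_additive_general hn hJordan h2 e hid hcond1 hcond1' hcond2 hcond3 d hder
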